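/- The graph of (−1)-classes of the dP_4 lattice (which has 10 vertices: e_1,…,e_4 and l − e_i − e_j for 1 ≤ i < j ≤ 4) is isomorphic to the Petersen graph, i.e. the Kneser graph whose vertices are the 2-element subsets of a 5-element set with edges between disjoint subsets; consequently its automorphism group has order 120 (it is isomorphic to the symmetric group S_5). -/

import Mathlib

namespace Stmt9

/-- Intersection form of the dP₄ lattice `ℤ⁵` with basis `l, e₁, …, e₄`. -/
def dot (x y : Fin 5 → ℤ) : ℤ := x 0 * y 0 - ∑ i : Fin 4, x i.succ * y i.succ

/-- The canonical class `K = -3l + e₁ + ⋯ + e₄`. -/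
def K : Fin 5 → ℤ := fun i => if i = 0 then -3 else 1

theorem dot_comm (x y : Fin 5 → ℤ) : dot x y = dot y x := by
  unfold dot
  congr 1
  · ring
  · exact Finset.sum_congr rfl fun i _ => mul_comm _ _

/-- The type of (−1)-classes of the dP₄ lattice. -/
def NegClass := {v : Fin 5 → ℤ // dot v v = -1 ∧ dot v K = -1}

/-- The graph of (−1)-classes of the dP₄ lattice. -/
def G : SimpleGraph NegClass where
  Adj v w := v ≠ w ∧ 1 ≤ dot v.1 w.1
  symm := ⟨by rintro v w ⟨h1, h2⟩; exact ⟨h1.symm, by rwa [dot_comm]⟩⟩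
  loopless := ⟨fun v h => h.1 rfl⟩

/-- The automorphism group of the graph `G`. -/
def Aut : Subgroup (Equiv.Perm NegClass) where
  carrier := {π | ∀ v w, G.Adj (π v) (π w) ↔ G.Adj v w}
  one_mem' := fun _ _ => Iff.rfl
  mul_mem' := by
    intro a b ha hb v w
    exact (ha (b v) (b w)).trans (hb v w)
  inv_mem' := by
    intro a ha v w
    simpa using (ha (a⁻¹ v) (a⁻¹ w)).symm

/-- The Kneser graph on the 2-element subsets of a 5-element set, with edges between
disjoint subsets (the Petersen graph). -/
def Kneser : SimpleGraph {s : Finset (Fin 5) // s.card = 2} where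
  Adj s t := Disjoint s.1 t.1
  symm := ⟨fun _ _ h => h.symm⟩
  loopless := ⟨by
    intro s h
    change Disjoint s.1 s.1 at h
    have h2 := s.2
    rw [disjoint_self] at h
    rw [h] at h2
    simp at h2⟩

/-!
Write a vector as `a l + b₁ e₁ + ⋯ + b₄ e₄`. A (−1)-class has `∑ bᵢ = 1 - 3a` and
`∑ bᵢ² = a² + 1`, so Cauchy–Schwarz gives `5a² - 6a - 3 ≤ 0`, i.e. `a ∈ {0, 1}`, and then
`|bᵢ| ≤ 1`; a finite search leaves the ten classes `eᵢ` and `l - eᵢ - eⱼ`. Labelling `eᵢ` by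
`{i, 5}` and `l - eᵢ - eⱼ` by the complement of `{i, j}` in `{1, 2, 3, 4}` turns `v · w ≥ 1`
into disjointness.

`S₅` acts faithfully on the Petersen graph. Conversely, an automorphism sends the four
pairwise intersecting pairs through a point `i` to four pairwise intersecting pairs, and these
again share a point `σ i`, since an intersecting family of 2-sets is a star or a triangle;
the resulting permutation `σ` induces the automorphism.
-/

open Finset

section adjAut

variable {V W : Type*}

def adjAut (H : SimpleGraph V) : Subgroup (Equiv.Perm V) where
  carrier := {π | ∀ v w, H.Adj (π v) (π w) ↔ H.Adj v w}
  one_mem' _ _ := Iff.rfl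
  mul_mem' ha hb v w := (ha _ _).trans (hb v w)
  inv_mem' {π} hπ v w := by simpa using (hπ (π⁻¹ v) (π⁻¹ w)).symm

theorem mem_adjAut {H : SimpleGraph V} {π : Equiv.Perm V} :
    π ∈ adjAut H ↔ ∀ v w, H.Adj (π v) (π w) ↔ H.Adj v w := Iff.rfl

theorem map_adjAut {H₁ : SimpleGraph V} {H₂ : SimpleGraph W} (e : H₁ ≃g H₂) :
    (adjAut H₁).map e.toEquiv.permCongrHom.toMonoidHom = adjAut H₂ := by
  ext π
  rw [Subgroup.map_equiv_eq_comap_symm', Subgroup.mem_comap, mem_adjAut, mem_adjAut]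
  exact e.toEquiv.forall_congr fun v => e.toEquiv.forall_congr fun w =>
    iff_congr e.symm.map_adj_iff e.map_adj_iff.symm

def adjAutCongr {H₁ : SimpleGraph V} {H₂ : SimpleGraph W} (e : H₁ ≃g H₂) :
    adjAut H₁ ≃* adjAut H₂ :=
  (e.toEquiv.permCongrHom.subgroupMap _).trans (MulEquiv.subgroupCongr (map_adjAut e))

end adjAut

abbrev Pair := {s : Finset (Fin 5) // s.card = 2}

/-- With `e₁, …, e₄` at the coordinates `1, …, 4`: the pair `{i, 4}` gives `e_{i+1}`, and a pair
`⊆ {0, 1, 2, 3}` gives `l - e_{j+1} - e_{k+1}` for the complementary pair `{j, k}`. -/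
def vecOfPair (s : Finset (Fin 5)) : Fin 5 → ℤ :=
  if 4 ∈ s then Fin.cons 0 fun i => if i.castSucc ∈ s then 1 else 0
  else Fin.cons 1 fun i => if i.castSucc ∈ s then 0 else -1

theorem vecOfPair_injective : ∀ s t : Pair, vecOfPair s = vecOfPair t → s = t := by
  decide

theorem dot_vecOfPair_self : ∀ s : Pair, dot (vecOfPair s) (vecOfPair s) = -1 := by
  decide

theorem dot_vecOfPair_K : ∀ s : Pair, dot (vecOfPair s) K = -1 := by
  decide

theorem one_le_dot_vecOfPair_iff :
    ∀ s t : Pair, 1 ≤ dot (vecOfPair s) (vecOfPair t) ↔ Disjoint s.1 t.1 := by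
  decide

def box : Fin 5 → Finset ℤ := Fin.cons {0, 1} fun _ => {-1, 0, 1}

theorem mem_box {v : Fin 5 → ℤ} (h1 : dot v v = -1) (h2 : dot v K = -1) :
    v ∈ Fintype.piFinset box := by
  have hsum : ∑ i : Fin 4, v i.succ = 1 - 3 * v 0 := by
    simp [dot, K, Fin.succ_ne_zero] at h2
    linarith
  have hsq : ∑ i : Fin 4, v i.succ ^ 2 = v 0 ^ 2 + 1 := by
    simp only [dot, ← sq] at h1
    linarith
  have hcs := sq_sum_le_card_mul_sum_sq (s := univ) (f := fun i : Fin 4 => v i.succ)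
  simp only [card_univ, Fintype.card_fin, hsum, hsq, Nat.cast_ofNat] at hcs
  have hv0 : 0 ≤ v 0 ∧ v 0 ≤ 1 := by constructor <;> nlinarith
  rw [Fintype.mem_piFinset, Fin.forall_fin_succ]
  refine ⟨?_, fun i => ?_⟩
  · simp only [box, Fin.cons_zero, mem_insert, mem_singleton]
    omega
  · have hi : v i.succ ^ 2 ≤ 2 := by
      have := single_le_sum (f := fun j => v j.succ ^ 2) (fun j _ => sq_nonneg _) (mem_univ i)
      nlinarith
    have : -1 ≤ v i.succ ∧ v i.succ ≤ 1 := by constructor <;> nlinarith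
    simp only [box, Fin.cons_succ, mem_insert, mem_singleton]
    omega

set_option maxRecDepth 10000 in
theorem exists_vecOfPair_of_mem_box : ∀ v ∈ Fintype.piFinset box,
    dot v v = -1 → dot v K = -1 → ∃ s : Pair, vecOfPair s = v := by
  decide

def negClassOfPair (s : Pair) : NegClass :=
  ⟨vecOfPair s, dot_vecOfPair_self s, dot_vecOfPair_K s⟩

theorem negClassOfPair_bijective : Function.Bijective negClassOfPair := by
  refine ⟨fun s t h => vecOfPair_injective s t (congrArg Subtype.val h), fun v => ?_⟩
  obtain ⟨s, hs⟩ := exists_vecOfPair_of_mem_box v.1 (mem_box v.2.1 v.2.2) v.2.1 v.2.2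
  exact ⟨s, Subtype.ext hs⟩

theorem G_adj_iff (v w : NegClass) : G.Adj v w ↔ 1 ≤ dot v.1 w.1 :=
  ⟨And.right, fun h => ⟨by rintro rfl; linarith [v.2.1], h⟩⟩

noncomputable def kneserIso : Kneser ≃g G where
  toEquiv := Equiv.ofBijective _ negClassOfPair_bijective
  map_rel_iff' {s t} := (G_adj_iff _ _).trans (one_le_dot_vecOfPair_iff s t)

def pairPerm : Equiv.Perm (Fin 5) →* Equiv.Perm Pair :=
  MulAction.toPermHom (Equiv.Perm (Fin 5)) (Set.powersetCard (Fin 5) 2)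

theorem pairPerm_apply_coe (σ : Equiv.Perm (Fin 5)) (s : Pair) :
    (pairPerm σ s).1 = s.1.image σ := rfl

theorem pairPerm_injective : Function.Injective pairPerm := by
  have : FaithfulSMul (Equiv.Perm (Fin 5)) (Set.powersetCard (Fin 5) 2) :=
    Set.powersetCard.faithfulSMul (by norm_num) (by simp; norm_num)
  exact MulAction.toPerm_injective

theorem pairPerm_mem_adjAut (σ : Equiv.Perm (Fin 5)) : pairPerm σ ∈ adjAut Kneser := fun s t => by
  change Disjoint (s.1.image σ) (t.1.image σ) ↔ Disjoint s.1 t.1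
  exact disjoint_image σ.injective

theorem card_filter_mem_pair (i : Fin 5) : #{s : Pair | i ∈ s.1} = 4 := by
  revert i
  decide

set_option maxRecDepth 100000 in
theorem exists_mem_of_intersecting_of_card_eq_four : ∀ S : Finset Pair, #S = 4 →
    (∀ s ∈ S, ∀ t ∈ S, ¬Disjoint s.1 t.1) → ∃ c, ∀ s ∈ S, c ∈ s.1 := by
  decide

theorem exists_disjoint_pairs_mem : ∀ i j : Fin 5, i ≠ j →
    ∃ s t : Pair, i ∈ s.1 ∧ j ∈ t.1 ∧ Disjoint s.1 t.1 := by
  decide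

theorem exists_forall_mem_apply_of_mem {π : Equiv.Perm Pair} (hπ : π ∈ adjAut Kneser)
    (i : Fin 5) : ∃ c, ∀ s : Pair, i ∈ s.1 → c ∈ (π s).1 := by
  obtain ⟨c, hc⟩ := exists_mem_of_intersecting_of_card_eq_four
    (({s : Pair | i ∈ s.1} : Finset Pair).map π.toEmbedding)
    (by rw [card_map, card_filter_mem_pair])
    (by
      simp only [mem_map_equiv, mem_filter, mem_univ, true_and]
      intro s hs t ht
      rw [← π.apply_symm_apply s, ← π.apply_symm_apply t]
      exact (hπ _ _).not.2 (not_disjoint_iff.2 ⟨i, hs, ht⟩))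
  exact ⟨c, fun s hs => hc _ (mem_map_of_mem _ (mem_filter.2 ⟨mem_univ s, hs⟩))⟩

theorem adjAut_kneser_le_range : adjAut Kneser ≤ pairPerm.range := by
  intro π hπ
  choose σ hσ using exists_forall_mem_apply_of_mem hπ
  have hσinj : Function.Injective σ := by
    intro i j hij
    by_contra hne
    obtain ⟨s, t, hi, hj, hst⟩ := exists_disjoint_pairs_mem i j hne
    exact disjoint_left.1 ((hπ s t).2 hst) (hσ i s hi) (hij ▸ hσ j t hj)
  refine ⟨Equiv.ofBijective σ hσinj.bijective_of_finite, Equiv.ext fun s => Subtype.ext ?_⟩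
  refine eq_of_subset_of_card_le (fun c hc => ?_) ?_
  · rw [pairPerm_apply_coe] at hc
    obtain ⟨x, hx, rfl⟩ := mem_image.1 hc
    exact hσ x s hx
  · rw [(π s).2, pairPerm_apply_coe, card_image_of_injective _ (Equiv.injective _), s.2]

theorem range_pairPerm : pairPerm.range = adjAut Kneser :=
  le_antisymm (by rintro _ ⟨σ, rfl⟩; exact pairPerm_mem_adjAut σ) adjAut_kneser_le_range

noncomputable def autEquivPerm : Aut ≃* Equiv.Perm (Fin 5) :=
  (adjAutCongr kneserIso.symm).trans
    ((MulEquiv.subgroupCongr range_pairPerm.symm).trans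
      (MonoidHom.ofInjective pairPerm_injective).symm)

theorem statement9 :
    Nat.card NegClass = 10 ∧
    Nonempty (G ≃g Kneser) ∧
    Nat.card ↥Aut = 120 ∧
    Nonempty (↥Aut ≃* Equiv.Perm (Fin 5)) := by
  refine ⟨?_, ⟨kneserIso.symm⟩, ?_, ⟨autEquivPerm⟩⟩
  · rw [← Nat.card_congr kneserIso.toEquiv, Nat.card_eq_fintype_card, Fintype.card_finset_len]
    rfl
  · rw [Nat.card_congr autEquivPerm.toEquiv, Nat.card_perm, Nat.card_fin]
    rfl

end Stmt9
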